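/- Fix integers n ≥ 2 and l ≥ 0. For all α, γ ∈ B^{(n)}_l, the identity K^{(n,l)}(z)^γ_α = K^{(n,l)}(z)^{ρ(α)}_{ρ(γ)} holds in F((t)), where ρ(α) = (α_n, …, α₂, α₁) denotes the reversal. -/

import Mathlib

open scoped Classical

noncomputable section

namespace KOY

/-- `F = ℚ(q)`, the field of rational functions in an indeterminate `q` over `ℚ`. -/
abbrev Fq : Type := RatFunc ℚ

/-- The indeterminate `q`. -/
def q : Fq := RatFunc.X

/-- `[u] = (q^u - q^{-u})/(q - q⁻¹)`. -/
def qint (u : ℤ) : Fq := (q ^ u - q ^ (-u)) / (q - q⁻¹)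

/-- `(z; a)_m = ∏_{k=0}^{m-1} (1 - z a^k)`. -/
def poch {R : Type*} [CommRing R] (z a : R) (m : ℕ) : R :=
  ∏ k ∈ Finset.range m, (1 - z * a ^ k)

/-- The `q`-boson Fock space `⊕_{m ≥ 0} F·|m⟩`. -/
abbrev Fock : Type := ℕ →₀ Fq

/-- creation operator `a⁺ |m⟩ = |m+1⟩`. -/
def aP : Module.End Fq Fock := Finsupp.lift Fock Fq ℕ fun m => Finsupp.single (m + 1) 1

/-- annihilation operator `a⁻ |m⟩ = (1-q^m)|m-1⟩`. -/
def aM : Module.End Fq Fock :=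
  Finsupp.lift Fock Fq ℕ fun m => (1 - q ^ m) • Finsupp.single (m - 1) 1

/-- `k |m⟩ = q^m |m⟩`. -/
def kO : Module.End Fq Fock := Finsupp.lift Fock Fq ℕ fun m => q ^ m • Finsupp.single m 1

/-- The operator `G^j_i` for `i, j ≥ 0` (`i` = lower index, `j` = upper index):
`G^j_i = (-q;q)_{i+j} Σ_{m=0}^{t} ((q^{-t};q)_m (-q^{-t};q)_m / ((q;q)_m (-q^{-s};q)_m))
  (a⁺)^{(j-i)_+} (q^m k^m) (a⁻)^{(i-j)_+}` with `s = i+j`, `t = min i j`. -/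
def GopN (i j : ℕ) : Module.End Fq Fock :=
  poch (-q) q (i + j) •
    ∑ m ∈ Finset.range (min i j + 1),
      (poch (q ^ (-(min i j : ℤ))) q m * poch (-q ^ (-(min i j : ℤ))) q m /
          (poch q q m * poch (-q ^ (-((i : ℤ) + j))) q m)) •
        (aP ^ (j - i) * (q ^ m • kO ^ m) * aM ^ (i - j))

/-- `G^j_i` with the convention that it vanishes for negative indices. -/
def Gop (i j : ℤ) : Module.End Fq Fock :=
  if 0 ≤ i ∧ 0 ≤ j then GopN i.toNat j.toNat else 0

/-- `X_{mm}`: the coefficient of `|m⟩` in `X |m⟩`. -/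
def elem (X : Module.End Fq Fock) (m : ℕ) : Fq := X (Finsupp.single m 1) m

/-- `⟨a, b⟩ = ∑_{i<j} a_i b_j` (natural numbers). -/
def innN {n : ℕ} (a b : Fin n → ℕ) : ℕ := ∑ i, ∑ j, if i < j then a i * b j else 0

/-- `⟨a, b⟩ = ∑_{i<j} a_i b_j` (integers). -/
def innZ {n : ℕ} (a b : Fin n → ℤ) : ℤ := ∑ i, ∑ j, if i < j then a i * b j else 0

/-- `|a| = ∑ a_i`. -/
def asum {k : ℕ} (a : Fin k → ℤ) : ℤ := ∑ i, a i

/-- coercion of arrays to integer arrays. -/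
def castZ {n : ℕ} (a : Fin n → ℕ) : Fin n → ℤ := fun i => (a i : ℤ)

/-- The matrix product formula for `K^{(n,l)}(z)^γ_α` as a power series in `t = z⁻¹`:
`q^{⟨γ,α⟩} (q^{-l}t;q)_{l+1} ((q²;q²)_l (-qt;q)_l)⁻¹ Σ_{m≥0} q^{-lm} t^m (G^{γ₁}_{α₁}⋯G^{γₙ}_{αₙ})_{mm}`,
with coefficients transported along a ring hom `f` from `ℚ(q)`. -/
def KmatPS {K : Type*} [Field K] (f : Fq →+* K) (n l : ℕ) (α γ : Fin n → ℕ) :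
    PowerSeries K :=
  PowerSeries.C (R := K) (f (q ^ innN γ α)) *
    poch (PowerSeries.C (R := K) (f (q ^ (-(l : ℤ)))) * PowerSeries.X) (PowerSeries.C (R := K) (f q)) (l + 1) *
    (PowerSeries.C (R := K) (f (poch (q ^ 2) (q ^ 2) l)) *
        poch (PowerSeries.C (R := K) (f (-q)) * PowerSeries.X) (PowerSeries.C (R := K) (f q)) l)⁻¹ *
    PowerSeries.mk fun m =>
      f (q ^ (-(l * m : ℤ)) * elem (List.ofFn fun i => Gop (α i) (γ i)).prod m)

/-- `F((t))`, the field of formal Laurent series in `t`. -/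
abbrev LS : Type := LaurentSeries Fq

/-- `K^{(n,l)}(z)^γ_α ∈ F((t))` (first array = lower index `α`, second = upper index `γ`). -/
def Kmat (n l : ℕ) (α γ : Fin n → ℕ) : LS :=
  HahnSeries.ofPowerSeries ℤ Fq (KmatPS (RingHom.id Fq) n l α γ)

/-- Extension of `Kmat` to integer arrays, vanishing if some entry is negative. -/
def KmatZ (n l : ℕ) (α γ : Fin n → ℤ) : LS :=
  if (∀ i, 0 ≤ α i) ∧ ∀ i, 0 ≤ γ i then
    Kmat n l (fun i => (α i).toNat) fun i => (γ i).toNat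
  else 0

/-- `t ∈ F((t))`. -/
def T : LS := HahnSeries.single (1 : ℤ) (1 : Fq)

/-- the constant embedding `F → F((t))`. -/
def CL : Fq →+* LS := HahnSeries.C

/-- `Φ̄_q(γ|β; λ, μ)` for integer arrays, vanishing unless `0 ≤ γ ≤ β`. -/
def phiBarP {K : Type*} [Field K] (qv lam mu : K) {k : ℕ} (γ β : Fin k → ℤ) : K :=
  if ∀ i, 0 ≤ γ i ∧ γ i ≤ β i then
    poch lam qv (asum γ).toNat * poch (mu / lam) qv (asum β - asum γ).toNat /
        poch mu qv (asum β).toNat *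
      ∏ i, poch qv qv (β i).toNat / (poch qv qv (β i - γ i).toNat * poch qv qv (γ i).toNat)
  else 0

/-- `Φ_q(γ|β; λ, μ) = q^{⟨β-γ,γ⟩} (μ/λ)^{|γ|} Φ̄_q(γ|β; λ, μ)`. -/
def phiP {K : Type*} [Field K] (qv lam mu : K) {k : ℕ} (γ β : Fin k → ℤ) : K :=
  qv ^ innZ (β - γ) γ * (mu / lam) ^ asum γ * phiBarP qv lam mu γ β

/-- truncation `ᾱ = (α₁, …, α_{n-1})` (as an integer array). -/
def bar {n : ℕ} (a : Fin n → ℕ) : Fin (n - 1) → ℤ :=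
  fun i => (a ⟨i.val, by have := i.isLt; omega⟩ : ℤ)

/-- `A^{(l,m)}(z)^{γ,δ}_{α,β}
  = q^{⟨α,β⟩-⟨δ,γ⟩} Σ_{ξ̄+η̄=γ̄+δ̄} Φ_{q²}(ξ̄-δ̄|ξ̄; q^{m-l}z, q^{-l-m}z) Φ_{q²}(η̄|β̄; q^{-l-m}z⁻¹, q^{-2m})`
in any field, for chosen values of `q` and `z`. -/
def Amat {K : Type*} [Field K] (qv zv : K) {n : ℕ} (l m : ℕ) (γ δ α β : Fin n → ℕ) : K :=
  qv ^ ((innN α β : ℤ) - (innN δ γ : ℤ)) *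
    ∑ ξ ∈ Finset.Icc (0 : Fin (n - 1) → ℤ) (bar γ + bar δ),
      phiP (qv ^ 2) (qv ^ ((m : ℤ) - l) * zv) (qv ^ (-(l : ℤ) - m) * zv) (ξ - bar δ) ξ *
        phiP (qv ^ 2) (qv ^ (-(l : ℤ) - m) * zv⁻¹) (qv ^ (-(2 * m : ℤ))) (bar γ + bar δ - ξ)
          (bar β)

/-- `𝒮(λ,μ)^{γ,δ}_{α,β} = θ(γ+δ=α+β) q^{⟨β-γ,γ⟩+⟨α,β-γ⟩+|α||β|-|γ||δ|} λ^{2(|δ|-|α|)}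
  Φ̄_{q²}(α|δ; λ², μ²)`, the parametric `R` matrix element. -/
def Smat {K : Type*} [Field K] (qv lam mu : K) {k : ℕ} (γ δ α β : Fin k → ℕ) : K :=
  if γ + δ = α + β then
    qv ^ (innZ (castZ β - castZ γ) (castZ γ) + innZ (castZ α) (castZ β - castZ γ) +
          (asum (castZ α) * asum (castZ β) - asum (castZ γ) * asum (castZ δ))) *
      lam ^ (2 * (asum (castZ δ) - asum (castZ α))) *
      phiBarP (qv ^ 2) (lam ^ 2) (mu ^ 2) (castZ α) (castZ δ)
  else 0

/-- reversal `ρ(a) = (a_n, …, a_1)`. -/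
def rev {n : ℕ} {M : Type*} (a : Fin n → M) : Fin n → M := fun i => a i.rev

/-- cyclic shift `σ(a) = (a_2, …, a_n, a_1)`. -/
def cyc {n : ℕ} {M : Type*} (a : Fin n → M) : Fin n → M :=
  fun i => a ⟨(i.val + 1) % n, Nat.mod_lt _ (by have := i.isLt; omega)⟩

/-- the cyclic successor on `Fin n`. -/
def nxt {n : ℕ} (i : Fin n) : Fin n :=
  ⟨(i.val + 1) % n, Nat.mod_lt _ (by have := i.isLt; omega)⟩

/-- deletion of the `i`-th entry of an array. -/
def del {n : ℕ} (i : Fin n) (a : Fin n → ℕ) : Fin (n - 1) → ℕ :=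
  fun j =>
    if (j : ℕ) < (i : ℕ) then a ⟨j, by have := j.isLt; omega⟩
    else a ⟨(j : ℕ) + 1, by have := j.isLt; omega⟩

/-- the `q²`-binomial coefficient `binom(b, c)_{q²}` as an element of `ℚ(q)`. -/
def qbinom2 (b c : ℕ) : Fq :=
  poch (q ^ 2) (q ^ 2) b / (poch (q ^ 2) (q ^ 2) (b - c) * poch (q ^ 2) (q ^ 2) c)

/-- `ℚ(q)(z) = ℚ(q, z)`. -/
abbrev Fqz : Type := RatFunc Fq

/-- the image of `q` in `ℚ(q, z)`. -/
def qz : Fqz := RatFunc.C q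

/-- the indeterminate `z` in `ℚ(q, z)`. -/
def zz : Fqz := RatFunc.X

/-! The Fock space carries the symmetric bilinear form `⟨m|m'⟩ = δ_{mm'} (q;q)_m`, for which
`a⁺` and `a⁻` are adjoint to each other and `k` is self-adjoint. As the coefficients of `G^j_i`
are symmetric in `i, j`, the adjoint of `G^j_i` is `G^i_j`, so the adjoint of
`G^{γ₁}_{α₁} ⋯ G^{γₙ}_{αₙ}` is `G^{αₙ}_{γₙ} ⋯ G^{α₁}_{γ₁}`. The weights `(q;q)_m` are nonzero, so
adjoint operators have the same diagonal coefficients, and the two series in the matrix product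
formula agree term by term; the prefactor is unchanged because `⟨ρ(α), ρ(γ)⟩ = ⟨γ, α⟩`. -/

end KOY

namespace LinearMap

variable {R M : Type*} [CommRing R] [AddCommGroup M] [Module R M] {B : M →ₗ[R] M →ₗ[R] R}

theorem IsSymm.isAdjointPair_swap (hB : B.IsSymm) {f g : M → M}
    (h : IsAdjointPair B B f g) : IsAdjointPair B B g f := fun x y => by
  rw [← hB.eq, ← h, ← hB.eq]
  rfl

theorem IsAdjointPair.pow {f g : Module.End R M} (h : IsAdjointPair B B f g) :
    ∀ k : ℕ, IsAdjointPair B B ⇑(f ^ k) ⇑(g ^ k)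
  | 0 => isAdjointPair_one
  | k + 1 => by
    rw [pow_succ, pow_succ']
    exact (h.pow k).mul h

theorem isAdjointPair_sum {ι : Type*} (s : Finset ι) {f g : ι → Module.End R M}
    (h : ∀ i ∈ s, IsAdjointPair B B ⇑(f i) ⇑(g i)) :
    IsAdjointPair B B ⇑(∑ i ∈ s, f i) ⇑(∑ i ∈ s, g i) := by
  classical
  induction s using Finset.induction_on with
  | empty => exact fun _ _ => by simp
  | insert a s ha ih =>
    rw [Finset.sum_insert ha, Finset.sum_insert ha]
    simp only [Finset.forall_mem_insert] at h
    exact h.1.add (ih h.2)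

theorem isAdjointPair_prod_ofFn : ∀ {n : ℕ} {f g : Fin n → Module.End R M},
    (∀ i, IsAdjointPair B B ⇑(f i) ⇑(g i)) →
      IsAdjointPair B B ⇑(List.ofFn f).prod ⇑(List.ofFn fun i => g i.rev).prod
  | 0, _, _, _ => by simpa using isAdjointPair_one
  | n + 1, f, g, h => by
    rw [List.ofFn_succ, List.ofFn_succ', List.prod_cons, List.prod_concat, Fin.rev_last]
    simp only [Fin.rev_castSucc]
    exact (h 0).mul (isAdjointPair_prod_ofFn fun i => h i.succ)

end LinearMap

namespace Finsupp

section WeightedPairing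

variable {ι R : Type*} [CommRing R] (w : ι → R)

def weightedPairing : (ι →₀ R) →ₗ[R] (ι →₀ R) →ₗ[R] R :=
  Finsupp.lift _ R ι fun i => w i • Finsupp.lapply i

theorem weightedPairing_single_one_left (i : ι) (v : ι →₀ R) :
    weightedPairing w (single i 1) v = w i * v i := by
  simp [weightedPairing]

theorem weightedPairing_isSymm : (weightedPairing w).IsSymm := by
  classical
  rw [LinearMap.isSymm_iff_eq_flip]
  refine LinearMap.ext_basis Finsupp.basisSingleOne Finsupp.basisSingleOne fun i j => ?_
  simp only [coe_basisSingleOne, LinearMap.flip_apply, weightedPairing_single_one_left,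
    single_apply]
  split_ifs <;> simp_all

theorem weightedPairing_single_one_right (v : ι →₀ R) (i : ι) :
    weightedPairing w v (single i 1) = w i * v i :=
  ((weightedPairing_isSymm w).eq _ _).symm.trans (weightedPairing_single_one_left w i v)

variable {w}

theorem isAdjointPair_weightedPairing_of_single {f g : Module.End R (ι →₀ R)}
    (h : ∀ i j, w j * f (single i 1) j = w i * g (single j 1) i) :
    LinearMap.IsAdjointPair (weightedPairing w) (weightedPairing w) f g := by
  rw [LinearMap.isAdjointPair_iff_comp_eq_compl₂]
  refine LinearMap.ext_basis Finsupp.basisSingleOne Finsupp.basisSingleOne fun i j => ?_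
  simpa [weightedPairing_single_one_left, weightedPairing_single_one_right] using h i j

theorem apply_single_one_self_eq_of_isAdjointPair [IsDomain R] {f g : Module.End R (ι →₀ R)}
    (h : LinearMap.IsAdjointPair (weightedPairing w) (weightedPairing w) f g) {i : ι}
    (hw : w i ≠ 0) : f (single i 1) i = g (single i 1) i := by
  have := h (single i 1) (single i 1)
  rw [weightedPairing_single_one_left, weightedPairing_single_one_right] at this
  exact mul_left_cancel₀ hw this

end WeightedPairing

end Finsupp

namespace KOY

open LinearMap (IsAdjointPair)

theorem poch_succ {R : Type*} [CommRing R] (z a : R) (m : ℕ) :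
    poch z a (m + 1) = poch z a m * (1 - z * a ^ m) :=
  Finset.prod_range_succ _ _

abbrev fockPairing : Fock →ₗ[Fq] Fock →ₗ[Fq] Fq := Finsupp.weightedPairing (poch q q)

theorem poch_q_q_ne_zero (m : ℕ) : poch q q m ≠ 0 := by
  refine Finset.prod_ne_zero_iff.mpr fun k _ hk => ?_
  have hX : (Polynomial.X : Polynomial ℚ) ^ (k + 1) = 1 := by
    apply RatFunc.algebraMap_injective ℚ
    rw [map_pow, map_one, RatFunc.algebraMap_X, pow_succ']
    exact (sub_eq_zero.mp hk).symm
  simpa using congrArg (Polynomial.eval 0) hX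

theorem aP_single (a : ℕ) : aP (Finsupp.single a 1) = Finsupp.single (a + 1) 1 := by
  simp [aP]

theorem aM_single (a : ℕ) :
    aM (Finsupp.single a 1) = (1 - q ^ a) • Finsupp.single (a - 1) 1 := by
  simp [aM]

theorem kO_single (a : ℕ) : kO (Finsupp.single a 1) = q ^ a • Finsupp.single a 1 := by
  rw [kO, Finsupp.lift_apply, Finsupp.sum_single_index] <;> simp

theorem isAdjointPair_aP_aM : IsAdjointPair fockPairing fockPairing aP aM := by
  refine Finsupp.isAdjointPair_weightedPairing_of_single fun a b => ?_
  simp only [aP_single, aM_single, Finsupp.smul_apply, Finsupp.single_apply, smul_eq_mul]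
  by_cases hb : b = a + 1
  · subst hb
    simp [poch_succ, pow_succ']
  · rcases b with _ | b
    · simp
    · have hab : a ≠ b := by omega
      simp [hab, hab.symm]

theorem isAdjointPair_kO : IsAdjointPair fockPairing fockPairing kO kO := by
  refine Finsupp.isAdjointPair_weightedPairing_of_single fun a b => ?_
  simp only [kO_single, Finsupp.smul_apply, Finsupp.single_apply, smul_eq_mul]
  split_ifs <;> simp_all

theorem isAdjointPair_GopN (i j : ℕ) :
    IsAdjointPair fockPairing fockPairing (GopN i j) (GopN j i) := by
  have hM := (Finsupp.weightedPairing_isSymm _).isAdjointPair_swap isAdjointPair_aP_aM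
  unfold GopN
  rw [Nat.min_comm j i, Nat.add_comm j i, add_comm (j : ℤ) i, min_comm (j : ℤ) i]
  refine IsAdjointPair.smul _ (LinearMap.isAdjointPair_sum _ fun m _ => .smul _ ?_)
  rw [mul_assoc]
  exact (isAdjointPair_aP_aM.pow _).mul (((isAdjointPair_kO.pow m).smul _).mul (hM.pow _))

theorem innN_rev {n : ℕ} (a b : Fin n → ℕ) : innN (rev a) (rev b) = innN b a := by
  unfold innN rev
  rw [Finset.sum_comm]
  refine Fintype.sum_equiv Fin.revPerm _ _ fun j =>
    Fintype.sum_equiv Fin.revPerm _ _ fun i => ?_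
  simp [Fin.rev_lt_rev, mul_comm]

theorem elem_prod_Gop_rev {n : ℕ} (α γ : Fin n → ℕ) (m : ℕ) :
    elem (List.ofFn fun i => Gop (α i) (γ i)).prod m
      = elem (List.ofFn fun i => Gop ((rev γ i : ℕ) : ℤ) ((rev α i : ℕ) : ℤ)).prod m := by
  refine Finsupp.apply_single_one_self_eq_of_isAdjointPair
    (LinearMap.isAdjointPair_prod_ofFn (g := fun i => Gop (γ i) (α i)) fun i => ?_)
    (poch_q_q_ne_zero m)
  simpa [Gop] using isAdjointPair_GopN (α i) (γ i)

theorem statement5_general (n l : ℕ) (α γ : Fin n → ℕ) :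
    Kmat n l α γ = Kmat n l (rev γ) (rev α) := by
  simp only [Kmat, KmatPS, innN_rev, elem_prod_Gop_rev α γ]

/-- `K(z)^γ_α = K(z)^{ρ(α)}_{ρ(γ)}` where `ρ` is the reversal. -/
theorem statement5 (n l : ℕ) (hn : 2 ≤ n) (α γ : Fin n → ℕ)
    (hα : ∑ i, α i = l) (hγ : ∑ i, γ i = l) :
    Kmat n l α γ = Kmat n l (rev γ) (rev α) :=
  statement5_general n l α γ

end KOY
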